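/- Let G be a graph on n vertices with m edges, and let (π, B) be any embedding of V(G) into the leaves of a rooted binary tree. Then (2/9)·μ₂(G)·2m ≤ cng_{π,B}(G) ≤ μₙ(G)·2m/4, where μ₂ and μₙ are the second smallest and largest eigenvalues of the normalized Laplacian. -/

import Mathlib

open Matrix SimpleGraph

/-- Multiset of eigenvalues (with multiplicity) of a real symmetric matrix. -/
noncomputable def specM {ι : Type*} [Fintype ι] [DecidableEq ι] (M : Matrix ι ι ℝ) :
    Multiset ℝ := by
  classical exact if h : M.IsHermitian then Finset.univ.val.map h.eigenvalues else 0

/-- Eigenvalues sorted in increasing order. -/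
noncomputable def sortedSpec {ι : Type*} [Fintype ι] [DecidableEq ι] (M : Matrix ι ι ℝ) :
    List ℝ := (specM M).sort (· ≤ ·)

/-- Number of cut edges between `S` and its complement (each edge counted once,
ordered with its `S`-endpoint first). -/
def cutSize {n : ℕ} (G : SimpleGraph (Fin n)) [DecidableRel G.Adj] (S : Finset (Fin n)) : ℕ :=
  (Finset.univ.filter fun e : Fin n × Fin n => G.Adj e.1 e.2 ∧ e.1 ∈ S ∧ e.2 ∉ S).card

/-- A rooted binary tree with leaves labeled by `α`: every internal node has
exactly two children. -/
inductive BTree (α : Type) where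
  | leaf : α → BTree α
  | node : BTree α → BTree α → BTree α

/-- The list of leaf labels of a binary tree. -/
def BTree.leaves {α : Type} : BTree α → List α
  | .leaf a => [a]
  | .node l r => l.leaves ++ r.leaves

/-- The set of labels of the leaves below a node of the tree. -/
def BTree.labels {α : Type} [DecidableEq α] : BTree α → Finset α
  | .leaf a => {a}
  | .node l r => l.labels ∪ r.labels

/-- All nodes (subtrees) of a binary tree. -/
def BTree.subtrees {α : Type} : BTree α → List (BTree α)
  | .leaf a => [.leaf a]
  | .node l r => .node l r :: (l.subtrees ++ r.subtrees)

/-- `BTree.OccAt root t d` : `t` is a node of `root` at distance `d` from the root. -/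
inductive BTree.OccAt {α : Type} (root : BTree α) : BTree α → ℕ → Prop where
  | refl : BTree.OccAt root root 0
  | left {l r : BTree α} {d : ℕ} :
      BTree.OccAt root (.node l r) d → BTree.OccAt root l (d + 1)
  | right {l r : BTree α} {d : ℕ} :
      BTree.OccAt root (.node l r) d → BTree.OccAt root r (d + 1)

/-- The congestion of the leaf-embedding given by the binary tree `T`:
the maximum cut size `e_G(S, V∖S)` over all nodes `S` of `T`. -/
def cng {n : ℕ} (G : SimpleGraph (Fin n)) [DecidableRel G.Adj] (T : BTree (Fin n)) : ℕ :=
  ((T.subtrees).map fun t => cutSize G t.labels).foldr max 0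

/-- The normalized Laplacian `𝓛 = D^{-1/2} (D − A) D^{-1/2}` of a graph. -/
noncomputable def normLap {n : ℕ} (G : SimpleGraph (Fin n)) [DecidableRel G.Adj] :
    Matrix (Fin n) (Fin n) ℝ :=
  Matrix.diagonal (fun v => (Real.sqrt (G.degree v))⁻¹) * G.lapMatrix ℝ *
    Matrix.diagonal (fun v => (Real.sqrt (G.degree v))⁻¹)

/-- The volume of a vertex subset: the sum of the degrees of its vertices. -/
def vol {n : ℕ} (G : SimpleGraph (Fin n)) [DecidableRel G.Adj] (S : Finset (Fin n)) : ℕ :=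
  ∑ v ∈ S, G.degree v

section SpectralAux

variable {m : ℕ} {M : Matrix (Fin m) (Fin m) ℝ}

lemma sortedSpec_sorted : (sortedSpec M).Pairwise (· ≤ ·) := Multiset.pairwise_sort _ _

lemma sortedSpec_length (hM : M.IsHermitian) : (sortedSpec M).length = m := by
  rw [sortedSpec, Multiset.length_sort, specM, dif_pos hM]; simp

lemma mem_sortedSpec (hM : M.IsHermitian) (i : Fin m) :
    hM.eigenvalues i ∈ sortedSpec M := by
  rw [sortedSpec, Multiset.mem_sort, specM, dif_pos hM]
  exact Multiset.mem_map_of_mem _ (Finset.mem_univ_val i)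

lemma sorted_le_getD_last {l : List ℝ} (hl : l.Pairwise (· ≤ ·)) {a : ℝ} (ha : a ∈ l) :
    a ≤ l.getD (l.length - 1) 0 := by
  obtain ⟨i, rfl⟩ := List.get_of_mem ha
  have hne : l ≠ [] := List.ne_nil_of_mem ha
  have hlen : 0 < l.length := List.length_pos_iff.2 hne
  have hlt : l.length - 1 < l.length := by omega
  have : l.getD (l.length - 1) 0 = l.get ⟨l.length - 1, hlt⟩ := by
    simp [List.getD_eq_getElem?_getD, List.getElem?_eq_getElem hlt]
  rw [this]
  have hile : i.val ≤ l.length - 1 := by omega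
  rcases lt_or_eq_of_le hile with h | h
  · exact List.pairwise_iff_get.mp hl i ⟨l.length - 1, hlt⟩ (show i < ⟨l.length - 1, hlt⟩ from h)
  · have : i = ⟨l.length - 1, hlt⟩ := Fin.ext h
    rw [this]

lemma card_filter_lt_second (hM : M.IsHermitian) :
    (Finset.univ.filter fun i => hM.eigenvalues i < (sortedSpec M).getD 1 0).card ≤ 1 := by
  classical
  have hcount : (Finset.univ.filter fun i => hM.eigenvalues i < (sortedSpec M).getD 1 0).card
      = (sortedSpec M).countP (fun x => decide (x < (sortedSpec M).getD 1 0)) := by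
    rw [sortedSpec, ← Multiset.coe_countP, Multiset.sort_eq, specM, dif_pos hM,
      Multiset.countP_map]
    simp [Finset.filter, Multiset.countP_eq_card_filter]
  rw [hcount]
  set μ := (sortedSpec M).getD 1 0 with hμ
  rcases h : sortedSpec M with _ | ⟨a, _ | ⟨b, t⟩⟩
  · simp
  · have := List.countP_le_length (l := [a]) (p := fun x => decide (x < μ)); simpa using this
  · have hsor : (a :: b :: t).Pairwise (· ≤ ·) := h ▸ sortedSpec_sorted
    have hb : μ = b := by rw [hμ, h]; rfl
    have h0 : (b :: t).countP (fun x => decide (x < μ)) = 0 := by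
      rw [List.countP_eq_zero]
      intro x hx
      simp only [decide_eq_true_eq, not_lt, hb]
      rcases List.mem_cons.1 hx with rfl | hx
      · exact le_refl x
      · exact List.rel_of_pairwise_cons hsor.tail hx
    rw [List.countP_cons, h0]
    split <;> simp



lemma inner_eq_dot (x y : Fin m → ℝ) :
    @inner ℝ (EuclideanSpace ℝ (Fin m)) _ (WithLp.toLp 2 x) (WithLp.toLp 2 y) = x ⬝ᵥ y := by
  simp [PiLp.inner_apply, RCLike.inner_apply, dotProduct, mul_comm]

/-- quadratic form decomposition through eigenbasis -/
lemma quadform_eq_sum {M : Matrix (Fin m) (Fin m) ℝ} (hM : M.IsHermitian)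
    (x : Fin m → ℝ) :
    x ⬝ᵥ M *ᵥ x = ∑ i, hM.eigenvalues i * (inner ℝ (hM.eigenvectorBasis i) (WithLp.toLp 2 x) : ℝ)^2 := by
  set b := hM.eigenvectorBasis
  have hx : ∑ i, (inner ℝ (b i) (WithLp.toLp 2 x) : ℝ) • b i = WithLp.toLp 2 x := b.sum_repr' _
  have hmv : M *ᵥ x = ∑ i, (inner ℝ (b i) (WithLp.toLp 2 x) : ℝ) • (hM.eigenvalues i • (b i : Fin m → ℝ)) := by
    have hfun : (∑ i, (inner ℝ (b i) (WithLp.toLp 2 x) : ℝ) • (b i : Fin m → ℝ)) = x := by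
      have := congrArg WithLp.ofLp hx; simpa using this
    conv_lhs => rw [← hfun]
    have hs : M *ᵥ (∑ i, (inner ℝ (b i) (WithLp.toLp 2 x) : ℝ) • (b i : Fin m → ℝ))
        = ∑ i, (inner ℝ (b i) (WithLp.toLp 2 x) : ℝ) • (M *ᵥ (b i : Fin m → ℝ)) := by
      simp only [← M.mulVecLin_apply, map_sum, _root_.map_smul]
    rw [hs]
    exact Finset.sum_congr rfl fun i _ =>
      congrArg (fun z => (inner ℝ (b i) (WithLp.toLp 2 x) : ℝ) • z) (hM.mulVec_eigenvectorBasis i)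
  rw [hmv]
  have hd : x ⬝ᵥ (∑ i, (inner ℝ (b i) (WithLp.toLp 2 x) : ℝ) • (hM.eigenvalues i • (b i : Fin m → ℝ)))
      = ∑ i, x ⬝ᵥ ((inner ℝ (b i) (WithLp.toLp 2 x) : ℝ) • (hM.eigenvalues i • (b i : Fin m → ℝ))) := by
    simp only [dotProduct, Finset.sum_apply, Finset.mul_sum]
    exact Finset.sum_comm
  rw [hd]
  refine Finset.sum_congr rfl fun i _ => ?_
  rw [dotProduct_smul, dotProduct_smul, smul_eq_mul, smul_eq_mul]
  have : x ⬝ᵥ (b i : Fin m → ℝ) = (inner ℝ (b i) (WithLp.toLp 2 x) : ℝ) := by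
    rw [← inner_eq_dot]; exact real_inner_comm _ _
  rw [this]; ring

lemma norm_eq_sum {M : Matrix (Fin m) (Fin m) ℝ} (hM : M.IsHermitian)
    (x : Fin m → ℝ) :
    x ⬝ᵥ x = ∑ i, (inner ℝ (hM.eigenvectorBasis i) (WithLp.toLp 2 x) : ℝ)^2 := by
  have := hM.eigenvectorBasis.sum_inner_mul_inner (𝕜 := ℝ) (WithLp.toLp 2 x) (WithLp.toLp 2 x)
  rw [← inner_eq_dot, ← this]
  refine Finset.sum_congr rfl fun i _ => ?_
  rw [real_inner_comm _ (hM.eigenvectorBasis i)]; ring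


lemma quadform_le_max (hM : M.IsHermitian) (x : Fin m → ℝ) :
    x ⬝ᵥ M *ᵥ x ≤ (sortedSpec M).getD (m - 1) 0 * (x ⬝ᵥ x) := by
  rw [quadform_eq_sum hM x, norm_eq_sum hM x, Finset.mul_sum]
  refine Finset.sum_le_sum fun i _ => ?_
  have h1 : hM.eigenvalues i ≤ (sortedSpec M).getD (m - 1) 0 := by
    have := sorted_le_getD_last (sortedSpec_sorted (M := M)) (mem_sortedSpec hM i)
    rwa [sortedSpec_length hM] at this
  exact mul_le_mul_of_nonneg_right h1 (sq_nonneg _)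

lemma quadform_ge_second (hM : M.IsHermitian) (hnn : ∀ i, 0 ≤ hM.eigenvalues i)
    (w x : Fin m → ℝ) (hw : w ≠ 0) (hMw : M *ᵥ w = 0)
    (hwx : w ⬝ᵥ x = 0) :
    (sortedSpec M).getD 1 0 * (x ⬝ᵥ x) ≤ x ⬝ᵥ M *ᵥ x := by
  classical
  set μ := (sortedSpec M).getD 1 0 with hμdef
  set b := hM.eigenvectorBasis with hbdef
  rw [quadform_eq_sum hM x, norm_eq_sum hM x, Finset.mul_sum]
  by_cases hμ : μ ≤ 0
  · calc ∑ i, μ * (inner ℝ (b i) (WithLp.toLp 2 x) : ℝ)^2 ≤ ∑ i, (0:ℝ) := by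
          refine Finset.sum_le_sum fun i _ => mul_nonpos_of_nonpos_of_nonneg hμ (sq_nonneg _)
       _ ≤ ∑ i, hM.eigenvalues i * (inner ℝ (b i) (WithLp.toLp 2 x) : ℝ)^2 := by
          rw [Finset.sum_const_zero]
          exact Finset.sum_nonneg fun i _ => mul_nonneg (hnn i) (sq_nonneg _)
  push_neg at hμ
  -- coefficients of w
  have hsymm : ∀ u v : Fin m → ℝ, u ⬝ᵥ M *ᵥ v = (M *ᵥ u) ⬝ᵥ v := by
    intro u v
    have hMt : Mᵀ = M := by rw [← conjTranspose_eq_transpose_of_trivial]; exact hM.eq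
    rw [dotProduct_mulVec, ← mulVec_transpose, hMt]
  have hlamw : ∀ j, hM.eigenvalues j * (inner ℝ (b j) (WithLp.toLp 2 w) : ℝ) = 0 := by
    intro j
    have h1 : (M *ᵥ (b j : Fin m → ℝ)) ⬝ᵥ w
        = (hM.eigenvalues j • (b j : Fin m → ℝ)) ⬝ᵥ w :=
      congrArg (fun z => z ⬝ᵥ w) (hM.mulVec_eigenvectorBasis j)
    have h2 : hM.eigenvalues j * ((b j : Fin m → ℝ) ⬝ᵥ w) = 0 := by
      rw [← smul_eq_mul, ← smul_dotProduct, ← h1, ← hsymm, hMw, dotProduct_zero]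
    rw [show inner ℝ (b j) (WithLp.toLp 2 w) = (b j : Fin m → ℝ) ⬝ᵥ w from inner_eq_dot _ _]
    exact h2
  set Z := Finset.univ.filter fun i => hM.eigenvalues i < μ with hZdef
  have hZcard : Z.card ≤ 1 := card_filter_lt_second hM
  have hout : ∀ j, j ∉ Z → μ ≤ hM.eigenvalues j := by
    intro j hj
    by_contra h
    exact hj (Finset.mem_filter.2 ⟨Finset.mem_univ _, lt_of_not_ge h⟩)
  -- some coefficient of w is nonzero
  obtain ⟨j0, hj0⟩ : ∃ j, (inner ℝ (b j) (WithLp.toLp 2 w) : ℝ) ≠ 0 := by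
    by_contra h
    push_neg at h
    apply hw
    have hr := b.sum_repr' (WithLp.toLp 2 w)
    have hz : ∑ i, (inner ℝ (b i) (WithLp.toLp 2 w) : ℝ) • b i
        = (0 : EuclideanSpace ℝ (Fin m)) :=
      Finset.sum_eq_zero fun i _ => by rw [h i, zero_smul]
    have := (hz.symm.trans hr).symm
    simpa using congrArg WithLp.ofLp this
  have hj0Z : j0 ∈ Z := by
    refine Finset.mem_filter.2 ⟨Finset.mem_univ _, ?_⟩
    have := hlamw j0
    rcases mul_eq_zero.1 this with h | h
    · rw [h]; exact hμ
    · exact absurd h hj0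
  have hZeq : ∀ i ∈ Z, i = j0 := fun i hi => Finset.card_le_one.1 hZcard i hi j0 hj0Z
  -- coefficient of x at j0 vanishes
  have hcj0 : (inner ℝ (b j0) (WithLp.toLp 2 x) : ℝ) = 0 := by
    have hpar : ∑ i, (inner ℝ (WithLp.toLp 2 w) (b i) : ℝ) * (inner ℝ (b i) (WithLp.toLp 2 x) : ℝ)
        = (inner ℝ (WithLp.toLp 2 w) (WithLp.toLp 2 x) : ℝ) :=
      b.sum_inner_mul_inner (WithLp.toLp 2 w) (WithLp.toLp 2 x)
    rw [show (inner ℝ (WithLp.toLp 2 w) (WithLp.toLp 2 x) : ℝ)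
      = w ⬝ᵥ x from inner_eq_dot w x, hwx] at hpar
    have hsingle : ∑ i, (inner ℝ (WithLp.toLp 2 w) (b i) : ℝ) * (inner ℝ (b i) (WithLp.toLp 2 x) : ℝ)
        = (inner ℝ (WithLp.toLp 2 w) (b j0) : ℝ) * (inner ℝ (b j0) (WithLp.toLp 2 x) : ℝ) := by
      refine Finset.sum_eq_single j0 (fun i _ hi => ?_) (fun h => absurd (Finset.mem_univ _) h)
      have hiZ : i ∉ Z := fun hmem => hi (hZeq i hmem)
      have : hM.eigenvalues i ≠ 0 := fun h0 => by
        have := hout i hiZ; rw [h0] at this; exact absurd (lt_of_lt_of_le hμ this) (lt_irrefl 0)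
      have : (inner ℝ (b i) (WithLp.toLp 2 w) : ℝ) = 0 := by
        rcases mul_eq_zero.1 (hlamw i) with h | h
        · exact absurd h this
        · exact h
      rw [real_inner_comm (b i) (WithLp.toLp 2 w), this, zero_mul]
    rw [hsingle] at hpar
    rcases mul_eq_zero.1 hpar with h | h
    · rw [real_inner_comm] at h; exact absurd h hj0
    · exact h
  refine Finset.sum_le_sum fun i _ => ?_
  by_cases hiZ : i ∈ Z
  · have : i = j0 := hZeq i hiZ
    rw [this, hcj0]
    simp
  · exact mul_le_mul_of_nonneg_right (hout i hiZ) (sq_nonneg _)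

end SpectralAux

section Graph
open SimpleGraph Finset

variable {n : ℕ} (G : SimpleGraph (Fin n)) [DecidableRel G.Adj]

lemma normLap_posSemidef : (normLap G).PosSemidef := by
  have h := (posSemidef_lapMatrix ℝ G).mul_mul_conjTranspose_same
    (Matrix.diagonal (fun v => (Real.sqrt (G.degree v))⁻¹))
  rw [Matrix.diagonal_conjTranspose] at h
  have hstar : (star fun v => (Real.sqrt (G.degree v))⁻¹) = fun v => (Real.sqrt (G.degree v))⁻¹ := by
    funext v; simp
  rw [hstar] at h
  exact h

lemma normLap_isHermitian : (normLap G).IsHermitian := (normLap_posSemidef G).isHermitian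


/-- the diagonal sqrt-degree vector -/
noncomputable def wvec : Fin n → ℝ := fun v => Real.sqrt (G.degree v)

lemma sqrt_deg_pos (hd : ∀ v, 0 < G.degree v) (v : Fin n) : 0 < Real.sqrt (G.degree v) := by
  have := hd v
  positivity

lemma normLap_mulVec_wvec (hd : ∀ v, 0 < G.degree v) : normLap G *ᵥ wvec G = 0 := by
  have h1 : Matrix.diagonal (fun v => (Real.sqrt (G.degree v))⁻¹) *ᵥ wvec G = fun _ => 1 := by
    funext v
    rw [Matrix.mulVec_diagonal]
    exact inv_mul_cancel₀ (ne_of_gt (sqrt_deg_pos G hd v))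
  rw [normLap, ← Matrix.mulVec_mulVec, ← Matrix.mulVec_mulVec, h1,
    lapMatrix_mulVec_const_eq_zero, Matrix.mulVec_zero]

lemma quad_normLap (hd : ∀ v, 0 < G.degree v) (y : Fin n → ℝ) :
    (fun v => Real.sqrt (G.degree v) * y v) ⬝ᵥ
        normLap G *ᵥ (fun v => Real.sqrt (G.degree v) * y v)
      = y ⬝ᵥ G.lapMatrix ℝ *ᵥ y := by
  set x : Fin n → ℝ := fun v => Real.sqrt (G.degree v) * y v with hx
  have h1 : Matrix.diagonal (fun v => (Real.sqrt (G.degree v))⁻¹) *ᵥ x = y := by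
    funext v
    rw [Matrix.mulVec_diagonal, hx]
    rw [← mul_assoc, inv_mul_cancel₀ (ne_of_gt (sqrt_deg_pos G hd v)), one_mul]
  have h2 : ∀ z : Fin n → ℝ,
      x ⬝ᵥ (Matrix.diagonal (fun v => (Real.sqrt (G.degree v))⁻¹) *ᵥ z)
        = y ⬝ᵥ z := by
    intro z
    rw [← h1]
    simp only [dotProduct, Matrix.mulVec_diagonal]
    exact Finset.sum_congr rfl fun v _ => by ring
  rw [normLap, ← Matrix.mulVec_mulVec, ← Matrix.mulVec_mulVec, h1, h2]

lemma quad_lap_cut (S : Finset (Fin n)) (c : ℝ) :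
    (fun v => (if v ∈ S then (1:ℝ) else 0) - c) ⬝ᵥ
        G.lapMatrix ℝ *ᵥ (fun v => (if v ∈ S then (1:ℝ) else 0) - c)
      = cutSize G S := by
  classical
  set y : Fin n → ℝ := fun v => (if v ∈ S then (1:ℝ) else 0) - c with hy
  have hq : y ⬝ᵥ G.lapMatrix ℝ *ᵥ y
      = (∑ i, ∑ j, if G.Adj i j then (y i - y j)^2 else 0) / 2 := by
    rw [← Matrix.toLinearMap₂'_apply', lapMatrix_toLinearMap₂']
  rw [hq]
  have hterm : ∀ i j, (if G.Adj i j then (y i - y j)^2 else 0)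
      = if G.Adj i j ∧ ((i ∈ S ∧ j ∉ S) ∨ (i ∉ S ∧ j ∈ S)) then (1:ℝ) else 0 := by
    intro i j
    by_cases ha : G.Adj i j <;> by_cases h1 : i ∈ S <;> by_cases h2 : j ∈ S <;>
      simp [hy, ha, h1, h2, sub_sq] <;> ring_nf <;> simp [sq_abs, sub_sq] <;> ring_nf
  simp_rw [hterm]
  rw [← Finset.sum_product']
  rw [show ((Finset.univ ×ˢ Finset.univ : Finset (Fin n × Fin n))) = Finset.univ from
    Finset.univ_product_univ]
  rw [Finset.sum_boole]
  have hsplit : (Finset.univ.filter fun e : Fin n × Fin n =>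
        G.Adj e.1 e.2 ∧ ((e.1 ∈ S ∧ e.2 ∉ S) ∨ (e.1 ∉ S ∧ e.2 ∈ S))).card
      = 2 * cutSize G S := by
    have hunion : (Finset.univ.filter fun e : Fin n × Fin n =>
          G.Adj e.1 e.2 ∧ ((e.1 ∈ S ∧ e.2 ∉ S) ∨ (e.1 ∉ S ∧ e.2 ∈ S)))
        = (Finset.univ.filter fun e : Fin n × Fin n => G.Adj e.1 e.2 ∧ e.1 ∈ S ∧ e.2 ∉ S)
          ∪ (Finset.univ.filter fun e : Fin n × Fin n => G.Adj e.1 e.2 ∧ e.1 ∉ S ∧ e.2 ∈ S) := by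
      ext e
      simp only [Finset.mem_filter, Finset.mem_union, Finset.mem_univ, true_and]
      tauto
    have hdisj : Disjoint
        (Finset.univ.filter fun e : Fin n × Fin n => G.Adj e.1 e.2 ∧ e.1 ∈ S ∧ e.2 ∉ S)
        (Finset.univ.filter fun e : Fin n × Fin n => G.Adj e.1 e.2 ∧ e.1 ∉ S ∧ e.2 ∈ S) := by
      rw [Finset.disjoint_filter]
      rintro e - ⟨-, h1, h2⟩ ⟨-, h3, -⟩
      exact h3 h1
    have hswap : (Finset.univ.filter fun e : Fin n × Fin n =>
          G.Adj e.1 e.2 ∧ e.1 ∉ S ∧ e.2 ∈ S).card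
        = cutSize G S := by
      rw [cutSize]
      apply Finset.card_bij (fun e _ => Prod.swap e)
      · rintro e he
        simp only [Finset.mem_filter, Finset.mem_univ, true_and] at he ⊢
        exact ⟨he.1.symm, he.2.2, he.2.1⟩
      · rintro e1 - e2 - h
        exact Prod.swap_injective h
      · rintro e he
        refine ⟨Prod.swap e, ?_, (Prod.swap_swap e).symm⟩
        simp only [Finset.mem_filter, Finset.mem_univ, true_and] at he ⊢
        exact ⟨he.1.symm, he.2.2, he.2.1⟩
    rw [hunion, Finset.card_union_of_disjoint hdisj, hswap, cutSize, two_mul]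
  rw [hsplit]
  push_cast
  ring

end Graph
section Tree

namespace BTree

lemma leaves_ne_nil {α : Type} (t : BTree α) : t.leaves ≠ [] := by
  induction t with
  | leaf a => simp [leaves]
  | node l r ihl ihr => simp [leaves, ihl]

lemma labels_eq_toFinset {α : Type} [DecidableEq α] (t : BTree α) :
    t.labels = t.leaves.toFinset := by
  induction t with
  | leaf a => simp [labels, leaves]
  | node l r ihl ihr => simp [labels, leaves, ihl, ihr]

lemma mem_subtrees_self {α : Type} (t : BTree α) : t ∈ t.subtrees := by
  cases t with
  | leaf a => simp [subtrees]
  | node l r => simp [subtrees]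

lemma leaves_sublist_of_mem_subtrees {α : Type} {T t : BTree α} (h : t ∈ T.subtrees) :
    t.leaves.Sublist T.leaves := by
  induction T with
  | leaf a =>
    simp only [subtrees, List.mem_singleton] at h
    subst h; exact List.Sublist.refl _
  | node l r ihl ihr =>
    rcases List.mem_cons.1 h with rfl | h
    · exact List.Sublist.refl _
    · rcases List.mem_append.1 h with h | h
      · exact (ihl h).trans (List.sublist_append_left _ _)
      · exact (ihr h).trans (List.sublist_append_right _ _)

end BTree

variable {n : ℕ} (G : SimpleGraph (Fin n)) [DecidableRel G.Adj]

lemma vol_node {l r : BTree (Fin n)} (hnd : (BTree.node l r).leaves.Nodup) :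
    vol G (BTree.node l r).labels = vol G l.labels + vol G r.labels := by
  have hdisj : Disjoint l.labels r.labels := by
    rw [BTree.labels_eq_toFinset, BTree.labels_eq_toFinset]
    rw [BTree.leaves, List.nodup_append] at hnd
    rw [List.disjoint_toFinset_iff_disjoint]
    exact fun a ha hb => hnd.2.2 a ha a hb rfl
  rw [show (BTree.node l r).labels = l.labels ∪ r.labels from rfl]
  exact Finset.sum_union hdisj

lemma exists_balanced_subtree
    (hleaf : ∀ a : Fin n, 3 * G.degree a ≤ 2 * vol G Finset.univ) :
    ∀ (t : BTree (Fin n)), t.leaves.Nodup →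
      2 * vol G Finset.univ ≤ 3 * vol G t.labels →
      ∃ s ∈ t.subtrees, vol G Finset.univ ≤ 3 * vol G s.labels ∧
        3 * vol G s.labels ≤ 2 * vol G Finset.univ := by
  intro t
  induction t with
  | leaf a =>
    intro hnd h2
    refine ⟨BTree.leaf a, BTree.mem_subtrees_self _, ?_, ?_⟩
    · omega
    · have := hleaf a
      have hv : vol G (BTree.leaf a).labels = G.degree a := by
        simp [BTree.labels, vol]
      omega
  | node l r ihl ihr =>
    intro hnd h2
    have hndl : l.leaves.Nodup := by
      rw [BTree.leaves, List.nodup_append] at hnd; exact hnd.1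
    have hndr : r.leaves.Nodup := by
      rw [BTree.leaves, List.nodup_append] at hnd; exact hnd.2.1
    have hsum := vol_node G hnd
    by_cases hnode : 3 * vol G (BTree.node l r).labels ≤ 2 * vol G Finset.univ
    · exact ⟨BTree.node l r, BTree.mem_subtrees_self _, by omega, hnode⟩
    · push_neg at hnode
      rcases le_total (vol G r.labels) (vol G l.labels) with hlr | hlr
      · by_cases h3 : 3 * vol G l.labels ≤ 2 * vol G Finset.univ
        · refine ⟨l, ?_, by omega, h3⟩
          exact List.mem_cons.2 (Or.inr (List.mem_append.2 (Or.inl (BTree.mem_subtrees_self _))))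
        · obtain ⟨s, hs, h4, h5⟩ := ihl hndl (by omega)
          exact ⟨s, List.mem_cons.2 (Or.inr (List.mem_append.2 (Or.inl hs))), h4, h5⟩
      · by_cases h3 : 3 * vol G r.labels ≤ 2 * vol G Finset.univ
        · refine ⟨r, ?_, by omega, h3⟩
          exact List.mem_cons.2 (Or.inr (List.mem_append.2 (Or.inr (BTree.mem_subtrees_self _))))
        · obtain ⟨s, hs, h4, h5⟩ := ihr hndr (by omega)
          exact ⟨s, List.mem_cons.2 (Or.inr (List.mem_append.2 (Or.inr hs))), h4, h5⟩

lemma degree_le_card_edges (v : Fin n) : G.degree v ≤ G.edgeFinset.card := by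
  rw [← SimpleGraph.card_incidenceFinset_eq_degree]
  exact Finset.card_le_card (by
    intro e he
    rw [SimpleGraph.mem_incidenceFinset] at he
    exact SimpleGraph.mem_edgeFinset.2 he.1)

lemma le_foldr_max {a : ℕ} {l : List ℕ} (h : a ∈ l) : a ≤ l.foldr max 0 := by
  induction l with
  | nil => simp at h
  | cons b t ih =>
    rcases List.mem_cons.1 h with rfl | h
    · exact le_max_left _ _
    · exact le_trans (ih h) (le_max_right _ _)

lemma foldr_max_le {l : List ℕ} {B : ℝ} (hB : 0 ≤ B) (h : ∀ a ∈ l, (a : ℝ) ≤ B) :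
    ((l.foldr max 0 : ℕ) : ℝ) ≤ B := by
  induction l with
  | nil => simpa using hB
  | cons b t ih =>
    rw [List.foldr_cons, Nat.cast_max]
    exact max_le (h b List.mem_cons_self) (ih fun a ha => h a (List.mem_cons_of_mem _ ha))

end Tree
section Final
open SimpleGraph

variable {n : ℕ} (G : SimpleGraph (Fin n)) [DecidableRel G.Adj]

lemma getD_nonneg_of {l : List ℝ} (h : ∀ a ∈ l, 0 ≤ a) (k : ℕ) : 0 ≤ l.getD k 0 := by
  rcases lt_or_ge k l.length with hk | hk
  · have h1 : l.getD k 0 = l.get ⟨k, hk⟩ := by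
      simp [List.getD_eq_getElem?_getD, List.getElem?_eq_getElem hk]
    rw [h1]
    exact h _ (List.get_mem l ⟨k, hk⟩)
  · rw [List.getD_eq_default _ _ hk]

lemma sortedSpec_normLap_nonneg : ∀ a ∈ sortedSpec (normLap G), 0 ≤ a := by
  intro a ha
  rw [sortedSpec, Multiset.mem_sort, specM, dif_pos (normLap_isHermitian G)] at ha
  obtain ⟨i, -, rfl⟩ := Multiset.mem_map.1 ha
  exact (normLap_posSemidef G).eigenvalues_nonneg i

lemma vol_univ_pos (hd : ∀ v, 0 < G.degree v) (hn : 0 < n) : 0 < vol G Finset.univ := by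
  obtain ⟨v0⟩ : Nonempty (Fin n) := ⟨⟨0, hn⟩⟩
  calc 0 < G.degree v0 := hd v0
    _ ≤ ∑ v, G.degree v :=
      Finset.single_le_sum (f := fun v => G.degree v) (fun v _ => Nat.zero_le _)
        (Finset.mem_univ v0)

lemma vol_le_vol_univ (S : Finset (Fin n)) : vol G S ≤ vol G Finset.univ :=
  Finset.sum_le_sum_of_subset (Finset.subset_univ S)

lemma cut_spectral_bounds (hd : ∀ v, 0 < G.degree v) (hn : 0 < n) (S : Finset (Fin n)) :
    ((sortedSpec (normLap G)).getD 1 0) *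
        ((vol G S : ℝ) * ((vol G Finset.univ : ℝ) - (vol G S : ℝ)) / (vol G Finset.univ : ℝ))
      ≤ (cutSize G S : ℝ) ∧
    (cutSize G S : ℝ) ≤ ((sortedSpec (normLap G)).getD (n - 1) 0) *
        ((vol G S : ℝ) * ((vol G Finset.univ : ℝ) - (vol G S : ℝ)) / (vol G Finset.univ : ℝ)) := by
  classical
  have hVpos : (0:ℝ) < (vol G Finset.univ : ℝ) := by
    exact_mod_cast vol_univ_pos G hd hn
  set Vr : ℝ := (vol G Finset.univ : ℝ) with hVr
  set s : ℝ := (vol G S : ℝ) with hs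
  set c : ℝ := s / Vr with hc
  set y : Fin n → ℝ := fun v => (if v ∈ S then (1:ℝ) else 0) - c with hy
  set xv : Fin n → ℝ := fun v => Real.sqrt (G.degree v) * y v with hxv
  -- quadratic form equals cut size
  have hquad : xv ⬝ᵥ normLap G *ᵥ xv = (cutSize G S : ℝ) := by
    rw [hxv, quad_normLap G hd y, hy, quad_lap_cut G S c]
  -- squared norm
  have hnormsq : xv ⬝ᵥ xv = s * (Vr - s) / Vr := by
    have e1 : xv ⬝ᵥ xv = ∑ v, (G.degree v : ℝ) * (y v)^2 := by
      rw [dotProduct]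
      refine Finset.sum_congr rfl fun v _ => ?_
      show Real.sqrt (G.degree v) * y v * (Real.sqrt (G.degree v) * y v)
          = (G.degree v : ℝ) * (y v)^2
      have hss : Real.sqrt (G.degree v) * Real.sqrt (G.degree v) = (G.degree v : ℝ) :=
        Real.mul_self_sqrt (by positivity)
      nlinarith [hss]
    have hfS : Finset.univ.filter (fun v => v ∈ S) = S := by ext v; simp
    have hsplitd := Finset.sum_filter_add_sum_filter_not Finset.univ (fun v => v ∈ S)
      (fun v => (G.degree v : ℝ))
    have hsS : ∑ v ∈ S, (G.degree v : ℝ) = s := by rw [hs, vol]; push_cast; rfl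
    have hsNot : ∑ v ∈ Finset.univ.filter (fun v => ¬ v ∈ S), (G.degree v : ℝ) = Vr - s := by
      have : ∑ v, (G.degree v : ℝ) = Vr := by rw [hVr, vol]; push_cast; rfl
      rw [hfS, hsS] at hsplitd
      linarith [hsplitd.trans this]
    have e2 : ∑ v, (G.degree v : ℝ) * (y v)^2 = s * (1 - c)^2 + (Vr - s) * c^2 := by
      rw [← Finset.sum_filter_add_sum_filter_not Finset.univ (fun v => v ∈ S), hfS]
      have t1 : ∑ v ∈ S, (G.degree v : ℝ) * (y v)^2 = s * (1 - c)^2 := by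
        rw [← hsS, Finset.sum_mul]
        refine Finset.sum_congr rfl fun v hv => ?_
        rw [hy]; simp [hv]
      have t2 : ∑ v ∈ Finset.univ.filter (fun v => ¬ v ∈ S), (G.degree v : ℝ) * (y v)^2
          = (Vr - s) * c^2 := by
        rw [← hsNot, Finset.sum_mul]
        refine Finset.sum_congr rfl fun v hv => ?_
        rw [Finset.mem_filter] at hv
        rw [hy]; simp [hv.2]
      rw [t1, t2]
    rw [e1, e2, hc]
    field_simp
    ring
  -- orthogonality
  have horthdot : wvec G ⬝ᵥ xv = 0 := by
    have e1 : wvec G ⬝ᵥ xv = ∑ v, (G.degree v : ℝ) * y v := by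
      rw [dotProduct]
      refine Finset.sum_congr rfl fun v _ => ?_
      rw [hxv, wvec, ← mul_assoc, Real.mul_self_sqrt (by positivity)]
    have e2 : ∑ v, (G.degree v : ℝ) * y v = s - c * Vr := by
      rw [hy]
      simp only [mul_sub, Finset.sum_sub_distrib, mul_ite, mul_one, mul_zero]
      rw [Finset.sum_ite_mem, Finset.univ_inter]
      have hsS : ∑ v ∈ S, (G.degree v : ℝ) = s := by rw [hs, vol]; push_cast; rfl
      have hsU : ∑ v : Fin n, (G.degree v : ℝ) = Vr := by rw [hVr, vol]; push_cast; rfl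
      rw [hsS, ← Finset.sum_mul, hsU, mul_comm]
    rw [e1, e2, hc]
    field_simp
    ring
  have hwne : wvec G ≠ 0 := by
    intro h
    have : wvec G ⟨0, hn⟩ = 0 := congrFun h ⟨0, hn⟩
    exact absurd this (ne_of_gt (sqrt_deg_pos G hd ⟨0, hn⟩))
  have hM := normLap_isHermitian G
  have hnn : ∀ i, 0 ≤ hM.eigenvalues i := fun i => (normLap_posSemidef G).eigenvalues_nonneg i
  constructor
  · have hlow := quadform_ge_second hM hnn (wvec G) xv hwne (normLap_mulVec_wvec G hd) horthdot
    rw [hquad, hnormsq] at hlow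
    exact hlow
  · have hup := quadform_le_max hM xv
    rw [hquad, hnormsq] at hup
    exact hup

end Final

/-- Normalized congestion bounds: for a graph with no isolated vertices, any
embedding of `V(G)` into the leaves of a rooted binary tree has congestion
between `(2/9)·μ₂(G)·2m` and `μₙ(G)·2m/4`, where `μ₂, μₙ` are the second
smallest and largest eigenvalues of the normalized Laplacian. -/
theorem normalized_congestion_bounds {n : ℕ} (G : SimpleGraph (Fin n)) [DecidableRel G.Adj]
    (hd : ∀ v, 0 < G.degree v)
    (T : BTree (Fin n)) (hnodup : T.leaves.Nodup) (hlabels : T.labels = Finset.univ) :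
    2 / 9 * (sortedSpec (normLap G)).getD 1 0 * (2 * G.edgeFinset.card) ≤ (cng G T : ℝ) ∧
    (cng G T : ℝ) ≤
      (sortedSpec (normLap G)).getD (n - 1) 0 * (2 * G.edgeFinset.card) / 4 := by
  classical
  rcases Nat.eq_zero_or_pos n with hn0 | hn
  · exfalso
    obtain ⟨a, -⟩ := List.exists_mem_of_ne_nil _ (BTree.leaves_ne_nil T)
    exact absurd a.isLt (by omega)
  have hμ2 : 0 ≤ (sortedSpec (normLap G)).getD 1 0 :=
    getD_nonneg_of (sortedSpec_normLap_nonneg G) 1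
  have hμn : 0 ≤ (sortedSpec (normLap G)).getD (n - 1) 0 :=
    getD_nonneg_of (sortedSpec_normLap_nonneg G) (n - 1)
  have hVpos : 0 < vol G Finset.univ := vol_univ_pos G hd hn
  have hVnat : vol G Finset.univ = 2 * G.edgeFinset.card := by
    rw [vol]; exact G.sum_degrees_eq_twice_card_edges
  have hVr : (vol G Finset.univ : ℝ) = 2 * G.edgeFinset.card := by
    rw [hVnat]; push_cast; ring
  have hVrpos : (0:ℝ) < (vol G Finset.univ : ℝ) := by exact_mod_cast hVpos
  constructor
  · -- lower bound
    have hleaf : ∀ a : Fin n, 3 * G.degree a ≤ 2 * vol G Finset.univ := by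
      intro a
      have h1 := degree_le_card_edges G a
      omega
    obtain ⟨t0, ht0mem, h1, h2⟩ := exists_balanced_subtree G hleaf T hnodup
      (by rw [hlabels]; omega)
    have hcut := (cut_spectral_bounds G hd hn t0.labels).1
    have hs1 : (vol G Finset.univ : ℝ) ≤ 3 * (vol G t0.labels : ℝ) := by exact_mod_cast h1
    have hs2 : 3 * (vol G t0.labels : ℝ) ≤ 2 * (vol G Finset.univ : ℝ) := by exact_mod_cast h2
    have hprod : 2 / 9 * (vol G Finset.univ : ℝ)
        ≤ (vol G t0.labels : ℝ) * ((vol G Finset.univ : ℝ) - (vol G t0.labels : ℝ))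
            / (vol G Finset.univ : ℝ) := by
      rw [le_div_iff₀ hVrpos]
      nlinarith [hs1, hs2, hVrpos]
    have hcng : (cutSize G t0.labels : ℝ) ≤ (cng G T : ℝ) := by
      have hmem : cutSize G t0.labels ∈ (T.subtrees).map fun t => cutSize G t.labels :=
        List.mem_map_of_mem ht0mem
      exact_mod_cast le_foldr_max hmem
    calc 2 / 9 * (sortedSpec (normLap G)).getD 1 0 * (2 * G.edgeFinset.card)
        = (sortedSpec (normLap G)).getD 1 0 * (2 / 9 * (vol G Finset.univ : ℝ)) := by
          rw [hVr]; ring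
      _ ≤ (sortedSpec (normLap G)).getD 1 0 *
            ((vol G t0.labels : ℝ) * ((vol G Finset.univ : ℝ) - (vol G t0.labels : ℝ))
              / (vol G Finset.univ : ℝ)) := mul_le_mul_of_nonneg_left hprod hμ2
      _ ≤ (cutSize G t0.labels : ℝ) := hcut
      _ ≤ (cng G T : ℝ) := hcng
  · -- upper bound
    have hbound : (cng G T : ℝ)
        ≤ (sortedSpec (normLap G)).getD (n - 1) 0 * (vol G Finset.univ : ℝ) / 4 := by
      rw [cng]
      refine foldr_max_le (by positivity) ?_
      intro a ha
      obtain ⟨t, htmem, rfl⟩ := List.mem_map.1 ha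
      have hup := (cut_spectral_bounds G hd hn t.labels).2
      have hsV : (vol G t.labels : ℝ) * ((vol G Finset.univ : ℝ) - (vol G t.labels : ℝ))
          / (vol G Finset.univ : ℝ) ≤ (vol G Finset.univ : ℝ) / 4 := by
        rw [div_le_div_iff₀ hVrpos (by norm_num : (0:ℝ) < 4)]
        nlinarith [sq_nonneg ((vol G Finset.univ : ℝ) - 2 * (vol G t.labels : ℝ))]
      calc (cutSize G t.labels : ℝ)
          ≤ (sortedSpec (normLap G)).getD (n - 1) 0 *
              ((vol G t.labels : ℝ) * ((vol G Finset.univ : ℝ) - (vol G t.labels : ℝ))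
                / (vol G Finset.univ : ℝ)) := hup
        _ ≤ (sortedSpec (normLap G)).getD (n - 1) 0 * ((vol G Finset.univ : ℝ) / 4) :=
              mul_le_mul_of_nonneg_left hsV hμn
        _ = (sortedSpec (normLap G)).getD (n - 1) 0 * (vol G Finset.univ : ℝ) / 4 := by ring
    rw [hVr] at hbound
    exact hbound
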